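/- arXiv:1608.07867 — 3 statements merged into one kernel-verified Lean document; each statement's English description precedes it below -/
import Mathlib

section
/- Suppose σ = {λ₀} with λ₀ ∈ ℝ nonzero, W(z) = 1 - z/λ₀, and the coupling constant c < 0. Then there is no pair of real polynomials (Φ₋, Φ₊) with Φ₋(λ₀) = c Φ₊(λ₀), Φ₋(0) = Φ₊(0) = 1, and Im(z Φ₋(z) Φ₊(z)/W(z)) ≥ 0 for all z in the open upper half-plane. -/
open Polynomial Complex Set Filter Topology

private lemma aeval_coe_real (P : Polynomial ℝ) (x : ℝ) :
    Polynomial.aeval (x:ℂ) P = ((P.eval x : ℝ):ℂ) := by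
  simpa using Polynomial.aeval_algebraMap_apply_eq_algebraMap_eval (A := ℂ) x P

private lemma deriv_nonneg_of_nonneg_right {h : ℝ → ℝ} {d : ℝ}
    (hd : HasDerivAt h d 0) (h0 : h 0 = 0) (hpos : ∀ ε : ℝ, 0 < ε → 0 ≤ h ε) :
    0 ≤ d := by
  rw [hasDerivAt_iff_tendsto_slope] at hd
  have hd' : Tendsto (slope h 0) (𝓝[>] 0) (𝓝 d) :=
    hd.mono_left (nhdsWithin_mono _ (fun x hx => ne_of_gt hx))
  refine ge_of_tendsto hd' ?_
  filter_upwards [self_mem_nhdsWithin] with ε (hε : 0 < ε)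
  rw [slope_def_field, h0, sub_zero, sub_zero]
  exact div_nonneg (hpos ε hε) hε.le

private lemma nonneg_lim_of_nonneg_right {F : ℝ → ℝ}
    (hF : Continuous F) (hpos : ∀ ε : ℝ, 0 < ε → 0 ≤ F ε) : 0 ≤ F 0 := by
  refine ge_of_tendsto ((hF.tendsto 0).mono_left (nhdsWithin_le_nhds (s := Set.Ioi 0))) ?_
  filter_upwards [self_mem_nhdsWithin] with ε (hε : 0 < ε)
  exact hpos ε hε

/-- Nonexistence for the one-point coupling problem with a
negative coupling constant: for `σ = {λ₀}`, `W(z) = 1 - z/λ₀` and `c < 0`,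
there is no pair of real polynomials `(Φ₋, Φ₊)` with `Φ₋(λ₀) = c Φ₊(λ₀)`,
`Φ₋(0) = Φ₊(0) = 1` and `Im(z Φ₋(z) Φ₊(z)/W(z)) ≥ 0` on the upper half-plane. -/
theorem one_point_coupling_nonexistence
    (lam : ℝ) (hlam : lam ≠ 0) (c : ℝ) (hc : c < 0) :
    ¬ ∃ Φm Φp : Polynomial ℝ,
      Φm.eval lam = c * Φp.eval lam ∧
      Φm.eval 0 = 1 ∧ Φp.eval 0 = 1 ∧
      ∀ z : ℂ, 0 < z.im →
        0 ≤ (z * (Polynomial.aeval z Φm) * (Polynomial.aeval z Φp) /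
              (1 - z / (lam : ℂ))).im := by
  rintro ⟨Φm, Φp, hcoup, hm0, hp0, H⟩
  have hlamC : (lam : ℂ) ≠ 0 := ofReal_ne_zero.mpr hlam
  -- Step 1: the boundary value at `lam` forces `Φp(lam) = 0`.
  set u : ℝ → ℂ := fun ε => (lam:ℂ) + (ε:ℂ)*I with hu_def
  have hu_cont : Continuous u := continuous_const.add (Complex.continuous_ofReal.mul continuous_const)
  set F : ℝ → ℝ := fun ε => lam * ((u ε) * aeval (u ε) Φm * aeval (u ε) Φp).re with hF_def
  have hFcont : Continuous F := by
    exact continuous_const.mul (Complex.continuous_re.comp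
      (((hu_cont.mul ((Φm.continuous_aeval).comp hu_cont)).mul
        ((Φp.continuous_aeval).comp hu_cont))))
  have hFpos : ∀ ε : ℝ, 0 < ε → 0 ≤ F ε := by
    intro ε hε
    have him : (u ε).im = ε := by simp [hu_def]
    have h1 := H (u ε) (by rw [him]; exact hε)
    set w : ℂ := (u ε) * aeval (u ε) Φm * aeval (u ε) Φp with hw
    have hd : (1:ℂ) - (u ε)/(lam:ℂ) = (↑(-(ε/lam)) : ℂ) * I := by
      simp only [hu_def]
      push_cast
      field_simp
      ring
    rw [hd] at h1
    have key : (w / ((↑(-(ε/lam)):ℂ)*I)).im = -w.re/(-(ε/lam)) := by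
      rw [Complex.div_im]
      simp [Complex.normSq_apply]
      field_simp
    rw [key] at h1
    have h2 : 0 ≤ lam * w.re / ε := by
      have : -w.re/(-(ε/lam)) = lam * w.re / ε := by field_simp
      rw [this] at h1; exact h1
    have h3 := mul_nonneg h2 hε.le
    rwa [div_mul_cancel₀ _ (ne_of_gt hε)] at h3
  have hF0 : 0 ≤ F 0 := nonneg_lim_of_nonneg_right hFcont hFpos
  have hF0eq : F 0 = lam * (lam * (Φm.eval lam * Φp.eval lam)) := by
    simp only [hF_def, hu_def, Complex.ofReal_zero, zero_mul, add_zero, aeval_coe_real]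
    rw [← Complex.ofReal_mul, ← Complex.ofReal_mul, Complex.ofReal_re]
    ring
  have hprootp : Φp.eval lam = 0 := by
    rw [hF0eq, hcoup] at hF0
    by_contra hne
    have hp2 : 0 < (Φp.eval lam)^2 := by positivity
    have hl2 : 0 < lam^2 := by positivity
    have hX : 0 < lam^2 * (Φp.eval lam)^2 := mul_pos hl2 hp2
    nlinarith [mul_neg_of_neg_of_pos hc hX]
  have hprootm : Φm.eval lam = 0 := by rw [hcoup, hprootp, mul_zero]
  -- Step 2: factor and define the polynomial `g`.
  obtain ⟨A, hA⟩ := (dvd_iff_isRoot.mpr hprootm : (X - C lam) ∣ Φm)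
  obtain ⟨B, hB⟩ := (dvd_iff_isRoot.mpr hprootp : (X - C lam) ∣ Φp)
  set g : Polynomial ℝ := C (-lam) * (X * ((X - C lam) * (A * B))) with hg_def
  have himg : ∀ z : ℂ, 0 < z.im → 0 ≤ (aeval z g).im := by
    intro z hz
    have hzne : (lam:ℂ) - z ≠ 0 := by
      intro h
      have hz' : z = (lam:ℂ) := by linear_combination -h
      rw [hz'] at hz; simp at hz
    have hdeneq : (1:ℂ) - z/(lam:ℂ) = ((lam:ℂ) - z)/(lam:ℂ) := by field_simp
    have heq : z * aeval z Φm * aeval z Φp / (1 - z/(lam:ℂ)) = aeval z g := by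
      have h1 : aeval z Φm = (z - (lam:ℂ)) * aeval z A := by
        rw [hA]; simp
      have h2 : aeval z Φp = (z - (lam:ℂ)) * aeval z B := by
        rw [hB]; simp
      have h3 : aeval z g = (-(lam:ℂ)) * (z * ((z - (lam:ℂ)) * (aeval z A * aeval z B))) := by
        simp [hg_def]
      rw [h1, h2, h3, hdeneq]
      field_simp
      ring
    rw [← heq]
    exact H z hz
  -- Step 3: the derivative of `g` is nonnegative on `ℝ`.
  have hderiv : ∀ t : ℝ, 0 ≤ (derivative g).eval t := by
    intro t
    have hu1 : HasDerivAt (fun ε : ℝ => (t:ℂ) + (ε:ℂ) * I) I 0 := by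
      simpa using ((Complex.ofRealCLM.hasDerivAt (x := (0:ℝ))).mul_const I).const_add (t:ℂ)
    have hg1 : HasDerivAt (fun z : ℂ => aeval z g) (aeval ((t:ℂ)) (derivative g)) ((t:ℂ) + ((0:ℝ):ℂ) * I) := by
      have : (t:ℂ) + ((0:ℝ):ℂ) * I = (t:ℂ) := by simp
      rw [this]
      exact Polynomial.hasDerivAt_aeval (q := g) (t:ℂ)
    have hcomp : HasDerivAt (fun ε : ℝ => aeval ((t:ℂ) + (ε:ℂ)*I) g)
        (aeval ((t:ℂ)) (derivative g) * I) 0 := by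
      have := hg1.comp (0:ℝ) hu1
      simpa [Function.comp_def] using this
    have him : HasDerivAt (fun ε : ℝ => (aeval ((t:ℂ) + (ε:ℂ)*I) g).im)
        ((derivative g).eval t) 0 := by
      have h2 := Complex.imCLM.hasFDerivAt.comp_hasDerivAt (0:ℝ) hcomp
      have h3 : Complex.imCLM (aeval ((t:ℂ)) (derivative g) * I) = (derivative g).eval t := by
        rw [aeval_coe_real]
        simp
      rw [h3] at h2
      simpa [Complex.imCLM_apply, Function.comp_def] using h2
    refine deriv_nonneg_of_nonneg_right him ?_ ?_
    · simp [aeval_coe_real]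
    · intro ε hε
      exact himg ((t:ℂ) + (ε:ℂ)*I) (by simpa using hε)
  -- Step 4: `g` is monotone, hence vanishes between its roots `0` and `lam`.
  have hmono : Monotone fun x : ℝ => g.eval x := by
    refine monotone_of_deriv_nonneg (Polynomial.differentiable g) (fun x => ?_)
    rw [Polynomial.deriv]
    exact hderiv x
  have h0root : g.eval 0 = 0 := by simp [hg_def]
  have hlroot : g.eval lam = 0 := by simp [hg_def]
  have hgzero : g = 0 := by
    apply eq_zero_of_infinite_isRoot
    rcases lt_or_gt_of_ne hlam with h | h
    · refine (Set.Ioo_infinite h).mono ?_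
      intro x hx
      have h1 := hmono hx.1.le
      have h2 := hmono hx.2.le
      simp only [hlroot] at h1
      simp only [h0root] at h2
      exact le_antisymm h2 h1
    · refine (Set.Ioo_infinite h).mono ?_
      intro x hx
      have h1 := hmono hx.1.le
      have h2 := hmono hx.2.le
      simp only [h0root] at h1
      simp only [hlroot] at h2
      exact le_antisymm h2 h1
  -- Step 5: contradiction.
  have hC : (C (-lam) : Polynomial ℝ) ≠ 0 := by
    simpa [Polynomial.C_eq_zero] using neg_ne_zero.mpr hlam
  have hstep1 : X * ((X - C lam) * (A * B)) = 0 :=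
    (mul_eq_zero.mp hgzero).resolve_left hC
  have hstep2 : (X - C lam) * (A * B) = 0 :=
    (mul_eq_zero.mp hstep1).resolve_left Polynomial.X_ne_zero
  have hstep3 : A * B = 0 :=
    (mul_eq_zero.mp hstep2).resolve_left (Polynomial.X_sub_C_ne_zero lam)
  rcases mul_eq_zero.mp hstep3 with h | h
  · rw [h, mul_zero] at hA
    rw [hA] at hm0
    simp at hm0
  · rw [h, mul_zero] at hB
    rw [hB] at hp0
    simp at hp0
end

section
/- Let (Φ₋, Φ₊) be a solution of the coupling problem with data η: real entire functions of exponential type zero with Φ₋(0) = Φ₊(0) = 1, Φ₋(λ) = η(λ)Φ₊(λ) for λ ∈ σ with η(λ) finite, and z Φ₋(z)Φ₊(z)/W(z) Herglotz–Nevanlinna. Then for every λ ∈ σ with η(λ) finite, η(λ) Φ₊(λ)² / (λ W'(λ)) ≤ 0. -/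
open OnePoint Filter Topology ComplexConjugate

/-!
Since `W` vanishes simply at `λ`, the Herglotz–Nevanlinna function `f z = z Φ₋(z) Φ₊(z) / W(z)`
has residue `R = λ Φ₋(λ) Φ₊(λ) / W'(λ) = λ² η(λ) Φ₊(λ)² / (λ W'(λ))` there. Approaching `λ` along
`λ + εu` with `Im u > 0` shows `Im (conj u · R) ≥ 0`; letting `u` run through `i` and `±1 + iδ`
forces `R` to be a nonpositive real.
-/

theorem tendsto_add_ofReal_mul_nhdsNE (x u : ℂ) (hu : u ≠ 0) :
    Tendsto (fun ε : ℝ => x + ε * u) (𝓝[>] 0) (𝓝[≠] x) := by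
  refine tendsto_nhdsWithin_iff.mpr ⟨?_, ?_⟩
  · have hcont : Continuous fun ε : ℝ => x + ε * u := by fun_prop
    simpa using (hcont.tendsto 0).mono_left nhdsWithin_le_nhds
  · filter_upwards [self_mem_nhdsWithin] with ε (hε : 0 < ε)
    simp [hu, hε.ne']

theorem HasDerivAt.tendsto_sub_mul_div_nhdsNE {W G : ℂ → ℂ} {x d : ℂ} (hW : HasDerivAt W d x)
    (hWx : W x = 0) (hd : d ≠ 0) (hG : ContinuousAt G x) :
    Tendsto (fun z => (z - x) * (G z / W z)) (𝓝[≠] x) (𝓝 (G x / d)) := by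
  have hslope : Tendsto (fun z => W z / (z - x)) (𝓝[≠] x) (𝓝 d) :=
    (hasDerivAt_iff_tendsto_slope.mp hW).congr fun z => by rw [slope_def_field, hWx, sub_zero]
  refine ((hG.tendsto.mono_left nhdsWithin_le_nhds).div hslope hd).congr fun z => ?_
  rw [Pi.div_apply, div_div_eq_mul_div]
  ring

section Herglotz

variable {f : ℂ → ℂ} {x : ℝ} {R : ℂ}

theorem im_conj_mul_nonneg_of_tendsto_sub_mul (hf : ∀ z : ℂ, 0 < z.im → 0 ≤ (f z).im)
    (hR : Tendsto (fun z => (z - x) * f z) (𝓝[≠] (x : ℂ)) (𝓝 R)) {u : ℂ} (hu : 0 < u.im) :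
    0 ≤ (conj u * R).im := by
  have hu0 : u ≠ 0 := fun h => by simp [h] at hu
  have hlim := Complex.continuous_im.continuousAt.tendsto.comp
    ((hR.comp (tendsto_add_ofReal_mul_nhdsNE x u hu0)).const_mul (conj u))
  refine ge_of_tendsto hlim ?_
  filter_upwards [self_mem_nhdsWithin] with ε (hε : 0 < ε)
  have hscale : conj u * ((x + ε * u - x) * f (x + ε * u))
      = ((ε * Complex.normSq u : ℝ) : ℂ) * f (x + ε * u) := by
    rw [add_sub_cancel_left, Complex.ofReal_mul, ← Complex.mul_conj]
    ring
  simp only [Function.comp_apply, hscale, Complex.im_ofReal_mul]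
  exact mul_nonneg (mul_nonneg hε.le (Complex.normSq_nonneg u)) (hf _ (by simpa using mul_pos hε hu))

theorem residue_nonpos_of_im_nonneg (hf : ∀ z : ℂ, 0 < z.im → 0 ≤ (f z).im)
    (hR : Tendsto (fun z => (z - x) * f z) (𝓝[≠] (x : ℂ)) (𝓝 R)) :
    R.im = 0 ∧ R.re ≤ 0 := by
  have hkey (s δ : ℝ) (hδ : 0 < δ) : δ * R.re ≤ s * R.im := by
    have h := im_conj_mul_nonneg_of_tendsto_sub_mul hf hR (u := s + δ * Complex.I) (by simpa)
    simp [Complex.mul_im] at h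
    linarith
  have hdir (s : ℝ) : 0 ≤ s * R.im := by
    have hlim : Tendsto (fun δ : ℝ => δ * R.re) (𝓝[>] 0) (𝓝 0) := by
      simpa using (tendsto_id (x := 𝓝 (0 : ℝ))).mul_const R.re |>.mono_left nhdsWithin_le_nhds
    exact le_of_tendsto hlim (eventually_nhdsWithin_of_forall fun δ hδ => hkey s δ hδ)
  have h0 := hkey 0 1 one_pos
  exact ⟨by linarith [hdir 1, hdir (-1)], by linarith⟩

end Herglotz

theorem coupling_sign_condition_general
    (σ : Set ℝ) (hσ0 : ∀ x ∈ σ, x ≠ 0)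
    (W : ℂ → ℂ) (hWd : Differentiable ℂ W)
    (hW : ∀ z : ℂ, HasProd (fun l : σ => (1 - z / ((l : ℝ) : ℂ))) (W z))
    (hW' : ∀ lam ∈ σ, deriv W (lam : ℂ) ≠ 0)
    (η : ℝ → OnePoint ℝ)
    (Φm Φp : ℂ → ℂ)
    (hΦmd : Differentiable ℂ Φm) (hΦpd : Differentiable ℂ Φp)
    (hcoup : ∀ lam ∈ σ, ∀ c : ℝ, η lam = (c : OnePoint ℝ) →
      Φm (lam : ℂ) = (c : ℂ) * Φp (lam : ℂ))
    (hherg : ∀ z : ℂ, 0 < z.im → 0 ≤ (z * Φm z * Φp z / W z).im) :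
    ∀ lam ∈ σ, ∀ c : ℝ, η lam = (c : OnePoint ℝ) →
      ((c : ℂ) * (Φp (lam : ℂ)) ^ 2 / ((lam : ℂ) * deriv W (lam : ℂ))).im = 0 ∧
      ((c : ℂ) * (Φp (lam : ℂ)) ^ 2 / ((lam : ℂ) * deriv W (lam : ℂ))).re ≤ 0 := by
  intro lam hlam c hc
  have hlam0 : (lam : ℂ) ≠ 0 := by exact_mod_cast hσ0 lam hlam
  have hWlam : W lam = 0 :=
    (hW lam).unique (hasProd_zero_of_exists_eq_zero ⟨⟨lam, hlam⟩, by simp [hlam0]⟩)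
  have hres := (hWd lam).hasDerivAt.tendsto_sub_mul_div_nhdsNE hWlam (hW' lam hlam)
    (G := fun z => z * Φm z * Φp z)
    ((continuous_id.mul hΦmd.continuous).mul hΦpd.continuous).continuousAt
  obtain ⟨him, hre⟩ := residue_nonpos_of_im_nonneg hherg hres
  have hscale : (c : ℂ) * Φp lam ^ 2 / (lam * deriv W lam)
      = lam * Φm lam * Φp lam / deriv W lam / ((lam ^ 2 : ℝ) : ℂ) := by
    rw [hcoup lam hlam c hc]
    push_cast
    field_simp
  rw [hscale, Complex.div_ofReal_re, Complex.div_ofReal_im, him]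
  exact ⟨zero_div _, div_nonpos_of_nonpos_of_nonneg hre (sq_nonneg _)⟩

/-- For any solution `(Φ₋, Φ₊)` of the coupling problem with data
`η`, one has `η(λ) Φ₊(λ)² / (λ W'(λ)) ≤ 0` for every `λ ∈ σ` with `η(λ)`
finite. -/
theorem coupling_sign_condition
    (σ : Set ℝ) (hσ0 : ∀ x ∈ σ, x ≠ 0)
    (W : ℂ → ℂ) (hWd : Differentiable ℂ W)
    (hW : ∀ z : ℂ, HasProd (fun l : σ => (1 - z / ((l : ℝ) : ℂ))) (W z))
    (hW' : ∀ lam ∈ σ, deriv W (lam : ℂ) ≠ 0)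
    (η : ℝ → OnePoint ℝ)
    (Φm Φp : ℂ → ℂ)
    (hΦmd : Differentiable ℂ Φm) (hΦpd : Differentiable ℂ Φp)
    (hΦmreal : ∀ x : ℝ, (Φm x).im = 0) (hΦpreal : ∀ x : ℝ, (Φp x).im = 0)
    (hΦmtype : ∀ ε > (0 : ℝ), ∃ C : ℝ, ∀ z : ℂ,
      ‖Φm z‖ ≤ C * Real.exp (ε * ‖z‖))
    (hΦptype : ∀ ε > (0 : ℝ), ∃ C : ℝ, ∀ z : ℂ,
      ‖Φp z‖ ≤ C * Real.exp (ε * ‖z‖))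
    (hnorm : Φm 0 = 1 ∧ Φp 0 = 1)
    (hcoup : ∀ lam ∈ σ, ∀ c : ℝ, η lam = (c : OnePoint ℝ) →
      Φm (lam : ℂ) = (c : ℂ) * Φp (lam : ℂ))
    (hherg : ∀ z : ℂ, 0 < z.im → 0 ≤ (z * Φm z * Φp z / W z).im) :
    ∀ lam ∈ σ, ∀ c : ℝ, η lam = (c : OnePoint ℝ) →
      ((c : ℂ) * (Φp (lam : ℂ)) ^ 2 / ((lam : ℂ) * deriv W (lam : ℂ))).im = 0 ∧
      ((c : ℂ) * (Φp (lam : ℂ)) ^ 2 / ((lam : ℂ) * deriv W (lam : ℂ))).re ≤ 0 :=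
  coupling_sign_condition_general σ hσ0 W hWd hW hW' η Φm Φp hΦmd hΦpd hcoup hherg
end

section
/- Let (Φ₋, Φ₊) solve the coupling problem with data η where η(λ) is finite and nonzero for all λ ∈ σ. If λ ∈ σ were a zero of Φ₋ of multiplicity ≥ 2 (or of Φ₊ of multiplicity ≥ 2), a contradiction arises: all zeros of Φ₋ and Φ₊ are simple. -/
/-!
`H z = z Φ₋(z) Φ₊(z) / W(z)` maps the upper half-plane into its closure. Near a zero `z₀` of `H`
of order `m ≥ 1` with `Im z₀ ≥ 0`, `H (z₀ + r u) ≈ c rᵐ uᵐ` as `r → 0⁺`, and some direction `u`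
puts this in the open lower half-plane. The points `z₀ + r u` stay in `ℂ₊` either because
`Im z₀ > 0`, or, when `m ≥ 2`, because such a `u` can be chosen in `ℂ₊`. So `H` has no zeros in
`ℂ₊` and no real zeros of order `≥ 2`.

By reflection a non-real zero of `Φ₋` would give a zero of `H` in `ℂ₊`, so a double zero `x` of
`Φ₋` is real. If `x ∈ σ`, the coupling forces `Φ₊(x) = 0`, which compensates the zero of `W`; that
zero is simple because convergence of the product at `±1 + i` forces `∑ 1/|λ| < ∞`. Either way `H`
has a real zero of order `≥ 2` at `x`.
-/

open Complex Filter Topology Set ComplexConjugate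

lemma im_exp_mul_I_pow_mul (θ : ℝ) (m : ℕ) (c : ℂ) :
    (exp (θ * I) ^ m * c).im = ‖c‖ * Real.sin (m * θ + arg c) := by
  conv_lhs => rw [← norm_mul_exp_arg_mul_I c, ← exp_nat_mul]
  rw [mul_left_comm, ← exp_add, ← mul_assoc, ← add_mul]
  have : (m : ℂ) * θ + arg c = ((m * θ + arg c : ℝ) : ℂ) := by push_cast; ring
  rw [this, im_ofReal_mul, exp_ofReal_mul_I_im]

lemma exists_pow_mul_im_neg {c : ℂ} (hc : c ≠ 0) {m : ℕ} (hm : m ≠ 0) :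
    ∃ u : ℂ, u ≠ 0 ∧ (u ^ m * c).im < 0 := by
  refine ⟨exp (↑((-(Real.pi / 2) - arg c) / m) * I), exp_ne_zero _, ?_⟩
  rw [im_exp_mul_I_pow_mul, mul_div_cancel₀ _ (by exact_mod_cast hm), sub_add_cancel, Real.sin_neg,
    Real.sin_pi_div_two]
  simpa using hc

lemma exists_im_pos_pow_mul_im_neg {c : ℂ} (hc : c ≠ 0) {m : ℕ} (hm : 2 ≤ m) :
    ∃ u : ℂ, 0 < u.im ∧ (u ^ m * c).im < 0 := by
  have := neg_pi_lt_arg c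
  have := arg_le_pi c
  have := Real.pi_pos
  obtain ⟨t, hct, htc, hsin⟩ : ∃ t, arg c < t ∧ t < arg c + 2 * Real.pi ∧ Real.sin t < 0 := by
    rcases lt_or_ge (-(Real.pi / 2)) (arg c) with h | h
    · refine ⟨Real.pi / 2 + Real.pi, by linarith, by linarith, ?_⟩
      rw [Real.sin_add_pi, Real.sin_pi_div_two]
      norm_num
    · refine ⟨-(Real.pi / 4), by linarith, by linarith, ?_⟩
      rw [Real.sin_neg, neg_neg_iff_pos]
      exact Real.sin_pos_of_pos_of_lt_pi (by positivity) (by linarith)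
  have hm0 : (0 : ℝ) < m := by positivity
  have hm2 : (2 : ℝ) ≤ m := by exact_mod_cast hm
  refine ⟨exp (↑((t - arg c) / m) * I), ?_, ?_⟩
  · rw [exp_ofReal_mul_I_im]
    refine Real.sin_pos_of_pos_of_lt_pi (div_pos (by linarith) hm0) ?_
    rw [div_lt_iff₀ hm0]
    nlinarith
  · rw [im_exp_mul_I_pow_mul, mul_div_cancel₀ _ hm0.ne', sub_add_cancel]
    exact mul_neg_of_pos_of_neg (norm_pos_iff.mpr hc) hsin

section Herglotz

variable {H : ℂ → ℂ} {z₀ : ℂ}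

lemma eventually_im_neg_of_meromorphicOrderAt_eq {n : ℕ}
    (hn : meromorphicOrderAt H z₀ = n) (hn0 : n ≠ 0) :
    ∃ c ≠ 0, ∀ u ≠ 0, (u ^ n * c).im < 0 → ∀ᶠ r : ℝ in 𝓝[>] 0, (H (z₀ + r * u)).im < 0 := by
  obtain ⟨g, hga, hg0, hHg⟩ := (meromorphicOrderAt_eq_int_iff
    (meromorphicAt_of_meromorphicOrderAt_ne_zero (by rw [hn]; exact_mod_cast hn0))).mp hn
  refine ⟨g z₀, hg0, fun u hu hneg => ?_⟩
  have hpath : Tendsto (fun r : ℝ => z₀ + r * u) (𝓝[>] 0) (𝓝[≠] z₀) := by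
    refine tendsto_nhdsWithin_of_tendsto_nhds_of_eventually_within _ ?_ ?_
    · have : Continuous fun r : ℝ => z₀ + r * u := by fun_prop
      simpa using this.tendsto' 0 _ rfl |>.mono_left nhdsWithin_le_nhds
    · filter_upwards [self_mem_nhdsWithin] with r hr
      simp [hu, (mem_Ioi.mp hr).ne']
  have hlim : Tendsto (fun r : ℝ => (u ^ n * g (z₀ + r * u)).im) (𝓝[>] 0) (𝓝 (u ^ n * g z₀).im) :=
    (continuous_im.tendsto _).comp
      (tendsto_const_nhds.mul (hga.continuousAt.tendsto.comp (hpath.mono_right nhdsWithin_le_nhds)))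
  filter_upwards [hpath.eventually hHg, hlim.eventually (gt_mem_nhds hneg), self_mem_nhdsWithin]
    with r hHr hgr hr
  rw [hHr, zpow_natCast, smul_eq_mul, add_sub_cancel_left, mul_pow, mul_assoc, ← ofReal_pow,
    im_ofReal_mul]
  exact mul_neg_of_pos_of_neg (pow_pos hr n) hgr

theorem meromorphicOrderAt_le_one_of_im_nonneg (hH : ∀ z, 0 < z.im → 0 ≤ (H z).im) (hz₀ : 0 ≤ z₀.im) (htop : meromorphicOrderAt H z₀ ≠ ⊤) :
    meromorphicOrderAt H z₀ ≤ 1 := by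
  obtain ⟨n, hn⟩ := WithTop.ne_top_iff_exists.mp htop
  rw [← hn]
  by_contra! hn1
  have hn1 : (1 : ℤ) < n := by exact_mod_cast hn1
  lift n to ℕ using (by omega)
  obtain ⟨c, hc, hdir⟩ := eventually_im_neg_of_meromorphicOrderAt_eq hn.symm (by omega)
  obtain ⟨u, hu, hneg⟩ := exists_im_pos_pow_mul_im_neg (m := n) hc (by omega)
  obtain ⟨r, hHr, hr⟩ := ((hdir u (by rintro rfl; simp at hu) hneg).and self_mem_nhdsWithin).exists
  exact hHr.not_ge (hH _ (by simp; positivity))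

theorem meromorphicOrderAt_nonpos_of_im_nonneg (hH : ∀ z, 0 < z.im → 0 ≤ (H z).im) (hz₀ : 0 < z₀.im) (htop : meromorphicOrderAt H z₀ ≠ ⊤) :
    meromorphicOrderAt H z₀ ≤ 0 := by
  obtain ⟨n, hn⟩ := WithTop.ne_top_iff_exists.mp htop
  rw [← hn]
  by_contra! hn0
  have hn0 : (0 : ℤ) < n := by exact_mod_cast hn0
  lift n to ℕ using hn0.le
  obtain ⟨c, hc, hdir⟩ := eventually_im_neg_of_meromorphicOrderAt_eq hn.symm (by omega)
  obtain ⟨u, hu, hneg⟩ := exists_pow_mul_im_neg hc (m := n) (by omega)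
  have hup : ∀ᶠ r : ℝ in 𝓝[>] 0, 0 < (z₀ + r * u).im := by
    have : Continuous fun r : ℝ => (z₀ + r * u).im := by fun_prop
    exact (this.tendsto' 0 _ (by simp)).eventually (lt_mem_nhds hz₀) |>.filter_mono
      nhdsWithin_le_nhds
  obtain ⟨r, hHr, hr⟩ := ((hdir u hu hneg).and hup).exists
  exact hHr.not_ge (hH _ hr)

end Herglotz

lemma meromorphicOrderAt_div_eq {𝕜 : Type*} [NontriviallyNormedField 𝕜] {N W : 𝕜 → 𝕜} {z₀ : 𝕜}
    (hN : AnalyticAt 𝕜 N z₀) (hW : AnalyticAt 𝕜 W z₀) {n k : ℕ}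
    (hn : analyticOrderAt N z₀ = n) (hk : analyticOrderAt W z₀ = k) :
    meromorphicOrderAt (fun z => N z / W z) z₀ = ((n - k : ℤ) : WithTop ℤ) := by
  rw [fun_meromorphicOrderAt_div hN.meromorphicAt hW.meromorphicAt, hN.meromorphicOrderAt_eq,
    hW.meromorphicOrderAt_eq, hn, hk]
  rfl

theorem analyticOrderAt_le_add_one_of_im_div_nonneg {N W : ℂ → ℂ} {z₀ : ℂ}
    (hN : AnalyticAt ℂ N z₀) (hW : AnalyticAt ℂ W z₀) (hNtop : analyticOrderAt N z₀ ≠ ⊤)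
    (hWtop : analyticOrderAt W z₀ ≠ ⊤) (hH : ∀ z, 0 < z.im → 0 ≤ (N z / W z).im)
    (hz₀ : 0 ≤ z₀.im) : analyticOrderAt N z₀ ≤ analyticOrderAt W z₀ + 1 := by
  lift analyticOrderAt N z₀ to ℕ using hNtop with n hn
  lift analyticOrderAt W z₀ to ℕ using hWtop with k hk
  have := meromorphicOrderAt_le_one_of_im_nonneg hH hz₀
    (by rw [meromorphicOrderAt_div_eq hN hW hn.symm hk.symm]; simp)
  rw [meromorphicOrderAt_div_eq hN hW hn.symm hk.symm] at this
  have hnk : (n : ℤ) - k ≤ 1 := by exact_mod_cast this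
  exact_mod_cast (by omega : n ≤ k + 1)

theorem analyticOrderAt_le_of_im_div_nonneg {N W : ℂ → ℂ} {z₀ : ℂ}
    (hN : AnalyticAt ℂ N z₀) (hW : AnalyticAt ℂ W z₀) (hNtop : analyticOrderAt N z₀ ≠ ⊤)
    (hWtop : analyticOrderAt W z₀ ≠ ⊤) (hH : ∀ z, 0 < z.im → 0 ≤ (N z / W z).im)
    (hz₀ : 0 < z₀.im) : analyticOrderAt N z₀ ≤ analyticOrderAt W z₀ := by
  lift analyticOrderAt N z₀ to ℕ using hNtop with n hn
  lift analyticOrderAt W z₀ to ℕ using hWtop with k hk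
  have := meromorphicOrderAt_nonpos_of_im_nonneg hH hz₀
    (by rw [meromorphicOrderAt_div_eq hN hW hn.symm hk.symm]; simp)
  rw [meromorphicOrderAt_div_eq hN hW hn.symm hk.symm] at this
  have hnk : (n : ℤ) - k ≤ 0 := by exact_mod_cast this
  exact_mod_cast (by omega : n ≤ k)

lemma two_le_analyticOrderAt_iff {𝕜 : Type*} [NontriviallyNormedField 𝕜] [CharZero 𝕜]
    {E : Type*} [NormedAddCommGroup E] [NormedSpace 𝕜 E] [CompleteSpace E] {f : 𝕜 → E} {z : 𝕜}
    (hf : AnalyticAt 𝕜 f z) : 2 ≤ analyticOrderAt f z ↔ f z = 0 ∧ deriv f z = 0 := by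
  rw [show (2 : ℕ∞) = (2 : ℕ) from rfl, natCast_le_analyticOrderAt_iff_iteratedDeriv_eq_zero hf]
  simp [Nat.le_one_iff_eq_zero_or_eq_one, or_imp, forall_and]

theorem Differentiable.apply_conj {f : ℂ → ℂ} (hf : Differentiable ℂ f)
    (hreal : ∀ x : ℝ, (f x).im = 0) (z : ℂ) : f (conj z) = conj (f z) := by
  have hg : Differentiable ℂ (conj ∘ f ∘ conj) := fun w => by
    simpa using (hf (conj w)).conj_conj
  have hreal' : ∃ᶠ w in 𝓝[≠] (0 : ℂ), f w = (conj ∘ f ∘ conj) w := by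
    have hofReal : Tendsto ((↑) : ℝ → ℂ) (𝓝[≠] 0) (𝓝[≠] 0) :=
      tendsto_nhdsWithin_of_tendsto_nhds_of_eventually_within _
        (continuous_ofReal.tendsto' 0 0 ofReal_zero |>.mono_left nhdsWithin_le_nhds)
        (eventually_nhdsWithin_of_forall fun x hx => by simpa using hx)
    exact hofReal.frequently (.of_forall fun x => by simp [conj_eq_iff_im.mpr (hreal x)])
  have := AnalyticOnNhd.eqOn_of_preconnected_of_frequently_eq (fun w _ => hf.analyticAt w)
    (fun w _ => hg.analyticAt w) isPreconnected_univ (mem_univ 0) hreal' (mem_univ (conj z))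
  simpa using this

lemma Finset.one_add_sum_le_prod_one_add {ι : Type*} (s : Finset ι) {b : ι → ℝ}
    (hb : ∀ i ∈ s, 0 ≤ b i) : 1 + ∑ i ∈ s, b i ≤ ∏ i ∈ s, (1 + b i) := by
  induction s using Finset.cons_induction with
  | empty => simp
  | cons j s hj ih =>
    rw [Finset.sum_cons, Finset.prod_cons]
    have hbj := hb j (Finset.mem_cons_self j s)
    have hbs := fun i hi => hb i (Finset.mem_cons_of_mem hi)
    nlinarith [ih hbs, Finset.sum_nonneg hbs]

lemma Multipliable.summable_of_one_add_le_max {ι : Type*} {v b : ι → ℝ} (hv : Multipliable v)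
    (hv0 : ∀ i, 0 < v i) (hb : ∀ i, 0 ≤ b i) (hvb : ∀ i, 1 + b i ≤ max 1 (v i)) : Summable b := by
  classical
  obtain ⟨r, -, s, hs⟩ := hv.eventually_bounded_finsetProd
  have hPs : 0 < ∏ i ∈ s, v i := Finset.prod_pos fun i _ => hv0 i
  refine summable_of_sum_le hb (c := ∑ i ∈ s, b i + r / ∏ i ∈ s, v i) fun F => ?_
  set G := (F \ s).filter (fun i => 1 < v i)
  have hFG : ∑ i ∈ G, b i = ∑ i ∈ F \ s, b i := Finset.sum_filter_of_ne fun i _ hbi => by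
    by_contra! h
    have := hvb i
    rw [max_eq_left h] at this
    exact hbi (le_antisymm (by linarith) (hb i))
  have hG : 1 + ∑ i ∈ G, b i ≤ ∏ i ∈ G, v i := by
    refine (Finset.one_add_sum_le_prod_one_add G fun i _ => hb i).trans
      (Finset.prod_le_prod (fun i _ => by linarith [hb i]) fun i hi => ?_)
    have := hvb i
    rwa [max_eq_right (Finset.mem_filter.mp hi).2.le] at this
  have hsG : (∏ i ∈ s, v i) * ∏ i ∈ G, v i ≤ r := by
    rw [← Finset.prod_union (Finset.disjoint_of_subset_right (Finset.filter_subset _ _)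
      Finset.disjoint_sdiff)]
    exact hs _ Finset.subset_union_left
  calc ∑ i ∈ F, b i ≤ ∑ i ∈ s ∪ F, b i :=
        Finset.sum_le_sum_of_subset_of_nonneg Finset.subset_union_right fun i _ _ => hb i
    _ = ∑ i ∈ s, b i + ∑ i ∈ G, b i := by
        rw [hFG, ← Finset.sum_union Finset.disjoint_sdiff, Finset.union_sdiff_self_eq_union]
    _ ≤ ∑ i ∈ s, b i + r / ∏ i ∈ s, v i := by
        gcongr
        rw [le_div_iff₀ hPs]
        nlinarith [Finset.sum_nonneg fun i (_ : i ∈ G) => hb i]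

lemma summable_max_neg_re_of_hasProd {ι : Type*} {w : ι → ℂ} {a : ℂ}
    (h : HasProd (fun i => 1 - w i) a) (hw : ∀ i, w i ≠ 1) :
    Summable fun i => max (-(w i).re) 0 :=
  h.norm.multipliable.summable_of_one_add_le_max
    (fun i => norm_pos_iff.mpr (sub_ne_zero.mpr (hw i).symm)) (fun i => le_max_right _ _)
    fun i => by
      rw [add_max, add_zero, ← sub_eq_add_neg, max_comm]
      exact max_le_max le_rfl (by simpa using re_le_norm (1 - w i))

lemma eq_of_one_sub_div_eq_zero {z w : ℂ} (h : 1 - z / w = 0) : z = w := by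
  have h1 : z / w = 1 := (sub_eq_zero.mp h).symm
  exact (div_eq_one_iff_eq (by rintro rfl; simp at h1)).mp h1

section ProductOneSubDiv

variable {ι : Type*} {c : ι → ℂ}

lemma multipliable_one_sub_div (hc : Summable fun i => ‖(c i)⁻¹‖) (z : ℂ) :
    Multipliable fun i => 1 - z / c i := by
  simpa [← sub_eq_add_neg] using multipliable_one_add_of_summable (f := fun i => -(z / c i))
    (by simpa [div_eq_mul_inv] using hc.mul_left ‖z‖)

lemma exists_one_sub_div_eq_zero_of_hasProd_zero (hc : Summable fun i => ‖(c i)⁻¹‖) {z : ℂ}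
    (h : HasProd (fun i => 1 - z / c i) 0) : ∃ i, 1 - z / c i = 0 := by
  by_contra! hne
  refine tprod_one_add_ne_zero_of_summable (f := fun i => -(z / c i))
    (by simpa [← sub_eq_add_neg] using hne) (by simpa [div_eq_mul_inv] using hc.mul_left ‖z‖) ?_
  simpa [← sub_eq_add_neg] using h.tprod_eq

lemma differentiable_tprod_one_sub_div (hc : Summable fun i => ‖(c i)⁻¹‖) :
    Differentiable ℂ fun z => ∏' i, (1 - z / c i) := by
  intro z₀
  have hK : IsOpen (Metric.ball (0 : ℂ) (‖z₀‖ + 1)) := Metric.isOpen_ball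
  have hprod := (hc.mul_left (‖z₀‖ + 1)).hasProdLocallyUniformlyOn_one_add
    (f := fun i z => -(z / c i)) hK
    (.of_forall fun i z hz => by
      rw [norm_neg, div_eq_mul_inv, norm_mul]
      exact mul_le_mul_of_nonneg_right (mem_ball_zero_iff.mp hz).le (norm_nonneg _))
    (fun i => by fun_prop)
  have hdiff := (hasProdLocallyUniformlyOn_iff_tendstoLocallyUniformlyOn.mp hprod).differentiableOn
    (.of_forall fun s => by fun_prop) hK
  simpa [← sub_eq_add_neg] using hdiff.differentiableAt (hK.mem_nhds (by simp))

lemma deriv_ne_zero_of_hasProd [DecidableEq ι] (hc : Summable fun i => ‖(c i)⁻¹‖) {W : ℂ → ℂ}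
    (hW : ∀ z, HasProd (fun i => 1 - z / c i) (W z)) {z₀ : ℂ} {i₀ : ι}
    (hi₀ : 1 - z₀ / c i₀ = 0) (huniq : ∀ i, 1 - z₀ / c i = 0 → i = i₀) : deriv W z₀ ≠ 0 := by
  -- drop the vanishing factor by replacing it with `1 - z / 0 = 1`
  set c' := Function.update c i₀ 0
  have hc' : Summable fun i => ‖(c' i)⁻¹‖ := hc.of_nonneg_of_le (fun _ => norm_nonneg _) fun i => by
    by_cases h : i = i₀ <;> simp [c', h]
  have hWQ : W = fun z => (1 - z / c i₀) * ∏' i, (1 - z / c' i) := funext fun z => by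
    have hupd : Function.update (fun i => 1 - z / c i) i₀ 1 = fun i => 1 - z / c' i := by
      funext i
      by_cases h : i = i₀ <;> simp [c', h]
    have := (hW z).update' i₀ 1 (a' := ∏' i, (1 - z / c' i))
      (by rw [hupd]; exact (multipliable_one_sub_div hc' z).hasProd)
    rwa [mul_one, mul_comm] at this
  have hQ0 : ∏' i, (1 - z₀ / c' i) ≠ 0 := fun h0 => by
    obtain ⟨i, hi⟩ := exists_one_sub_div_eq_zero_of_hasProd_zero hc'
      (h0 ▸ (multipliable_one_sub_div hc' z₀).hasProd)
    by_cases h : i = i₀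
    · simp [c', h] at hi
    · exact h (huniq i (by simpa [c', h] using hi))
  have hd : HasDerivAt (fun z => (1 - z / c i₀) * ∏' i, (1 - z / c' i))
      (-((c i₀)⁻¹ * ∏' i, (1 - z₀ / c' i))) z₀ := by
    simpa [hi₀] using ((hasDerivAt_id z₀).div_const (c i₀)).const_sub 1 |>.fun_mul
      ((differentiable_tprod_one_sub_div hc') z₀).hasDerivAt
  rw [hWQ, hd.deriv]
  exact neg_ne_zero.mpr (mul_ne_zero (by rintro h; simp_all) hQ0)

end ProductOneSubDiv

section CanonicalProduct

variable {σ : Set ℝ} {W : ℂ → ℂ}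

lemma summable_norm_inv_of_hasProd
    (hW : ∀ z : ℂ, HasProd (fun l : σ => (1 - z / ((l : ℝ) : ℂ))) (W z)) :
    Summable fun l : σ => ‖((l : ℝ) : ℂ)⁻¹‖ := by
  -- at `x + I` the factor of index `l` has real part `1 - x / l`: take `x = -1` for `l > 0`
  -- and `x = 1` for `l < 0`
  have hneg_re : ∀ x : ℝ, Summable fun l : σ => max (-((x + I) / ((l : ℝ) : ℂ)).re) 0 := fun x =>
    summable_max_neg_re_of_hasProd (hW (x + I)) fun l h => by
      have him := congrArg im h
      have hre := congrArg re h
      simp [div_ofReal_im, div_ofReal_re] at him hre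
      simp [him] at hre
  refine ((hneg_re (-1)).add (hneg_re 1)).congr fun l => ?_
  rw [norm_inv, norm_real, Real.norm_eq_abs, ← abs_inv, ← max_zero_add_max_neg_zero_eq_abs_self]
  simp only [add_re, ofReal_re, I_re, add_zero, div_ofReal_re]
  ring_nf

theorem exists_mem_eq_of_hasProd_of_eq_zero
    (hW : ∀ z : ℂ, HasProd (fun l : σ => (1 - z / ((l : ℝ) : ℂ))) (W z)) {z : ℂ} (hz : W z = 0) :
    ∃ x ∈ σ, z = x := by
  obtain ⟨l, hl⟩ := exists_one_sub_div_eq_zero_of_hasProd_zero (summable_norm_inv_of_hasProd hW)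
    (hz ▸ hW z)
  exact ⟨l, l.2, eq_of_one_sub_div_eq_zero hl⟩

theorem deriv_ne_zero_of_hasProd_of_eq_zero
    (hW : ∀ z : ℂ, HasProd (fun l : σ => (1 - z / ((l : ℝ) : ℂ))) (W z)) {z : ℂ} (hz : W z = 0) :
    deriv W z ≠ 0 := by
  classical
  obtain ⟨l, hl⟩ := exists_one_sub_div_eq_zero_of_hasProd_zero (summable_norm_inv_of_hasProd hW)
    (hz ▸ hW z)
  refine deriv_ne_zero_of_hasProd (summable_norm_inv_of_hasProd hW) hW hl fun l' hl' =>
    Subtype.ext ?_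
  exact_mod_cast (eq_of_one_sub_div_eq_zero hl').symm.trans (eq_of_one_sub_div_eq_zero hl)

end CanonicalProduct

lemma Differentiable.analyticOrderAt_ne_top {f : ℂ → ℂ} (hf : Differentiable ℂ f) (hf0 : f ≠ 0)
    (w : ℂ) : analyticOrderAt f w ≠ ⊤ :=
  (AnalyticOnNhd.analyticOrderAt_eq_top_iff_eq_zero w hf.analyticAt).not.mpr hf0

lemma analyticOrderAt_id_mul_mul {f g : ℂ → ℂ} {w : ℂ} (hf : AnalyticAt ℂ f w)
    (hg : AnalyticAt ℂ g w) : analyticOrderAt (fun z => z * f z * g z) w =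
      analyticOrderAt id w + analyticOrderAt f w + analyticOrderAt g w := by
  rw [show (fun z => z * f z * g z) = id * f * g from rfl,
    analyticOrderAt_mul (analyticAt_id.mul hf) hg, analyticOrderAt_mul analyticAt_id hf]

lemma analyticOrderAt_id_mul_mul_ne_top {f g : ℂ → ℂ} (hf : Differentiable ℂ f)
    (hg : Differentiable ℂ g) (hf0 : f ≠ 0) (hg0 : g ≠ 0) (w : ℂ) :
    analyticOrderAt (fun z => z * f z * g z) w ≠ ⊤ := by
  have hid : (id : ℂ → ℂ) ≠ 0 := fun h => by simpa using congrFun h 1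
  rw [analyticOrderAt_id_mul_mul (hf.analyticAt w) (hg.analyticAt w)]
  exact WithTop.add_ne_top.mpr ⟨WithTop.add_ne_top.mpr ⟨differentiable_id.analyticOrderAt_ne_top
    hid w, hf.analyticOrderAt_ne_top hf0 w⟩, hg.analyticOrderAt_ne_top hg0 w⟩

section Coupling

variable {σ : Set ℝ} {W f g : ℂ → ℂ}

lemma ne_zero_of_zeros_real (hWσ : ∀ z, W z = 0 → ∃ x ∈ σ, z = x) : W ≠ 0 := fun h => by
  obtain ⟨x, -, hx⟩ := hWσ I (by simp [h])
  simpa using congrArg im hx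

lemma apply_ne_zero_of_im_pos (hWd : Differentiable ℂ W) (hWσ : ∀ z, W z = 0 → ∃ x ∈ σ, z = x)
    (hfd : Differentiable ℂ f) (hgd : Differentiable ℂ g) (hf0 : f ≠ 0) (hg0 : g ≠ 0)
    (hH : ∀ z : ℂ, 0 < z.im → 0 ≤ (z * f z * g z / W z).im) {w : ℂ} (hw : 0 < w.im) :
    f w ≠ 0 := by
  intro hfw
  have hW0 := ne_zero_of_zeros_real hWσ
  have hWw : W w ≠ 0 := fun h => by
    obtain ⟨x, -, rfl⟩ := hWσ w h
    simp at hw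
  have hN := analyticOrderAt_le_of_im_div_nonneg (N := fun z => z * f z * g z)
    ((analyticAt_id.mul (hfd.analyticAt w)).mul (hgd.analyticAt w)) (hWd.analyticAt w)
    (analyticOrderAt_id_mul_mul_ne_top hfd hgd hf0 hg0 w) (hWd.analyticOrderAt_ne_top hW0 w) hH hw
  rw [(hWd.analyticAt w).analyticOrderAt_eq_zero.mpr hWw, nonpos_iff_eq_zero,
    analyticOrderAt_id_mul_mul (hfd.analyticAt w) (hgd.analyticAt w)] at hN
  exact (hfd.analyticAt w).analyticOrderAt_eq_zero.mp (by simp_all) hfw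

lemma im_eq_zero_of_apply_eq_zero (hWd : Differentiable ℂ W)
    (hWσ : ∀ z, W z = 0 → ∃ x ∈ σ, z = x) (hfd : Differentiable ℂ f) (hgd : Differentiable ℂ g)
    (hf0 : f ≠ 0) (hg0 : g ≠ 0) (hfreal : ∀ x : ℝ, (f x).im = 0)
    (hH : ∀ z : ℂ, 0 < z.im → 0 ≤ (z * f z * g z / W z).im) {z : ℂ} (hz : f z = 0) :
    z.im = 0 := by
  rcases lt_trichotomy z.im 0 with h | h | h
  · refine absurd ?_ (apply_ne_zero_of_im_pos hWd hWσ hfd hgd hf0 hg0 hH (w := conj z)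
      (by simpa using h))
    rw [hfd.apply_conj hfreal, hz, map_zero]
  · exact h
  · exact absurd hz (apply_ne_zero_of_im_pos hWd hWσ hfd hgd hf0 hg0 hH h)

theorem deriv_ne_zero_of_apply_eq_zero (hWd : Differentiable ℂ W)
    (hWσ : ∀ z, W z = 0 → ∃ x ∈ σ, z = x) (hWs : ∀ z, W z = 0 → deriv W z ≠ 0)
    (hfd : Differentiable ℂ f) (hgd : Differentiable ℂ g) (hf0 : f ≠ 0) (hg0 : g ≠ 0)
    (hfreal : ∀ x : ℝ, (f x).im = 0) (hfg : ∀ x ∈ σ, f x = 0 → g x = 0)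
    (hH : ∀ z : ℂ, 0 < z.im → 0 ≤ (z * f z * g z / W z).im) {z : ℂ} (hz : f z = 0) :
    deriv f z ≠ 0 := by
  intro hdz
  have hW0 := ne_zero_of_zeros_real hWσ
  have hf2 : 2 ≤ analyticOrderAt f z :=
    (two_le_analyticOrderAt_iff (hfd.analyticAt z)).mpr ⟨hz, hdz⟩
  -- a zero of `W` lies in `σ`, where it is simple and where the coupling makes `g` vanish
  have hWg : analyticOrderAt W z ≤ analyticOrderAt g z := by
    by_cases hWz : W z = 0
    · obtain ⟨x, hx, rfl⟩ := hWσ z hWz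
      have hW1 : analyticOrderAt W x ≤ 1 := by
        by_contra! h
        exact hWs x hWz ((two_le_analyticOrderAt_iff (hWd.analyticAt x)).mp
          (Order.add_one_le_of_lt h)).2
      exact hW1.trans (Order.one_le_iff_ne_zero.mpr
        ((hgd.analyticAt x).analyticOrderAt_ne_zero.mpr (hfg x hx hz)))
    · rw [(hWd.analyticAt z).analyticOrderAt_eq_zero.mpr hWz]
      exact zero_le
  have hN := analyticOrderAt_le_add_one_of_im_div_nonneg (N := fun z => z * f z * g z)
    ((analyticAt_id.mul (hfd.analyticAt z)).mul (hgd.analyticAt z)) (hWd.analyticAt z)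
    (analyticOrderAt_id_mul_mul_ne_top hfd hgd hf0 hg0 z) (hWd.analyticOrderAt_ne_top hW0 z) hH
    (im_eq_zero_of_apply_eq_zero hWd hWσ hfd hgd hf0 hg0 hfreal hH hz).ge
  rw [analyticOrderAt_id_mul_mul (hfd.analyticAt z) (hgd.analyticAt z)] at hN
  have hfg' : analyticOrderAt f z + analyticOrderAt g z ≤ 1 + analyticOrderAt g z :=
    calc _ ≤ analyticOrderAt id z + analyticOrderAt f z + analyticOrderAt g z := by
          rw [add_assoc]; exact le_add_self
      _ ≤ analyticOrderAt W z + 1 := hN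
      _ ≤ 1 + analyticOrderAt g z := by rw [add_comm]; gcongr
  have hf1 := (WithTop.add_le_add_iff_right (hgd.analyticOrderAt_ne_top hg0 z)).mp hfg'
  exact absurd (hf2.trans hf1) (by norm_num)

end Coupling

theorem coupling_zeros_simple_general
    (σ : Set ℝ)
    (W : ℂ → ℂ) (hWd : Differentiable ℂ W)
    (hW : ∀ z : ℂ, HasProd (fun l : σ => (1 - z / ((l : ℝ) : ℂ))) (W z))
    (η : ℝ → ℝ) (hη : ∀ lam ∈ σ, η lam ≠ 0)
    (Φm Φp : ℂ → ℂ)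
    (hΦmd : Differentiable ℂ Φm) (hΦpd : Differentiable ℂ Φp)
    (hΦmreal : ∀ x : ℝ, (Φm x).im = 0) (hΦpreal : ∀ x : ℝ, (Φp x).im = 0)
    (hnorm : Φm 0 = 1 ∧ Φp 0 = 1)
    (hcoup : ∀ lam ∈ σ, Φm (lam : ℂ) = (η lam : ℂ) * Φp (lam : ℂ))
    (hherg : ∀ z : ℂ, 0 < z.im → 0 ≤ (z * Φm z * Φp z / W z).im) :
    (∀ z : ℂ, Φm z = 0 → deriv Φm z ≠ 0) ∧
    (∀ z : ℂ, Φp z = 0 → deriv Φp z ≠ 0) := by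
  have hWσ : ∀ z, W z = 0 → ∃ x ∈ σ, z = x := fun _ => exists_mem_eq_of_hasProd_of_eq_zero hW
  have hWs : ∀ z, W z = 0 → deriv W z ≠ 0 := fun _ => deriv_ne_zero_of_hasProd_of_eq_zero hW
  have hΦm0 : Φm ≠ 0 := fun h => by simpa [h] using hnorm.1
  have hΦp0 : Φp ≠ 0 := fun h => by simpa [h] using hnorm.2
  refine ⟨fun z => deriv_ne_zero_of_apply_eq_zero hWd hWσ hWs hΦmd hΦpd hΦm0 hΦp0 hΦmreal
      (fun x hx h => ?_) hherg,
    fun z => deriv_ne_zero_of_apply_eq_zero hWd hWσ hWs hΦpd hΦmd hΦp0 hΦm0 hΦpreal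
      (fun x hx h => by rw [hcoup x hx, h, mul_zero]) fun z hz => ?_⟩
  · rw [hcoup x hx] at h
    exact (mul_eq_zero.mp h).resolve_left (ofReal_ne_zero.mpr (hη x hx))
  · simpa only [mul_right_comm] using hherg z hz

/-- If `(Φ₋, Φ₊)` solves the coupling problem with data `η` where
`η(λ)` is finite and nonzero for all `λ ∈ σ`, then all zeros of `Φ₋` and `Φ₊`
are simple. -/
theorem coupling_zeros_simple
    (σ : Set ℝ) (hσ0 : ∀ x ∈ σ, x ≠ 0)
    (W : ℂ → ℂ) (hWd : Differentiable ℂ W)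
    (hW : ∀ z : ℂ, HasProd (fun l : σ => (1 - z / ((l : ℝ) : ℂ))) (W z))
    (η : ℝ → ℝ) (hη : ∀ lam ∈ σ, η lam ≠ 0)
    (Φm Φp : ℂ → ℂ)
    (hΦmd : Differentiable ℂ Φm) (hΦpd : Differentiable ℂ Φp)
    (hΦmreal : ∀ x : ℝ, (Φm x).im = 0) (hΦpreal : ∀ x : ℝ, (Φp x).im = 0)
    (hΦmtype : ∀ ε > (0 : ℝ), ∃ C : ℝ, ∀ z : ℂ,
      ‖Φm z‖ ≤ C * Real.exp (ε * ‖z‖))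
    (hΦptype : ∀ ε > (0 : ℝ), ∃ C : ℝ, ∀ z : ℂ,
      ‖Φp z‖ ≤ C * Real.exp (ε * ‖z‖))
    (hnorm : Φm 0 = 1 ∧ Φp 0 = 1)
    (hcoup : ∀ lam ∈ σ, Φm (lam : ℂ) = (η lam : ℂ) * Φp (lam : ℂ))
    (hherg : ∀ z : ℂ, 0 < z.im → 0 ≤ (z * Φm z * Φp z / W z).im) :
    (∀ z : ℂ, Φm z = 0 → deriv Φm z ≠ 0) ∧
    (∀ z : ℂ, Φp z = 0 → deriv Φp z ≠ 0) :=
  coupling_zeros_simple_general σ W hWd hW η hη Φm Φp hΦmd hΦpd hΦmreal hΦpreal hnorm hcoup hherg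
end
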